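/- arXiv:1811.06650 — 2 statements merged into one kernel-verified Lean document; each statement's English description precedes it below -/
import Mathlib

section
/- Let m > 2 and λ_m ∈ ℝ. Suppose φ : ℝ → ℝ is convex, twice continuously differentiable, satisfies φ''(x) = −x² + λ_m + m^{−m}(m−1)^{m−1} |φ'(x)|^m for every x ∈ ℝ, and lim_{x→+∞} φ'(x)/x^{2/m} = m(m−1)^{1/m−1}, lim_{x→−∞} φ'(x)/|x|^{2/m} = −m(m−1)^{1/m−1}. Then φ''(x) → 0 as |x| → ∞. -/
/-!
Write `u = φ'`, so that `u' = -x² + λ + c |u|^m` with `c > 0`. The growth condition at `+∞`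
makes `u > 0` there, so `u'` is differentiable with `u'' = -2x + c m u^(m-1) u'`, and
`u^(m-1)` grows like `x^(2(m-1)/m)`, faster than `x` because `m > 2`. Hence, far out, the
level `u' = ε > 0` can only be crossed upwards and the level `u' = -ε` only downwards: once
`|u'| ≥ ε` it stays so, and `u` grows at least linearly, contradicting `u(x)/x → 0`.
The end `-∞` is reduced to `+∞` by the reflection `x ↦ -u(-x)`.
-/

open Filter Topology Set

theorem le_image_of_deriv_pos_at_boundary {g g' : ℝ → ℝ} {a δ : ℝ}
    (hg : ∀ x ≥ a, HasDerivAt g (g' x) x) (ha : δ ≤ g a)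
    (hbound : ∀ x ≥ a, g x = δ → 0 < g' x) {x : ℝ} (hx : a ≤ x) : δ ≤ g x := by
  have key := image_le_of_deriv_right_lt_deriv_boundary (f := -g) (f' := -g') (b := x)
    (B := fun _ => -δ) (B' := fun _ => 0)
    (fun y hy => (hg y hy.1).continuousAt.continuousWithinAt.neg)
    (fun y hy => (hg y hy.1).neg.hasDerivWithinAt) (by simpa using ha)
    (fun _ => hasDerivAt_const _ _)
    (fun y hy hy_eq => by simpa using hbound y hy.1 (by simpa using hy_eq)) ⟨hx, le_rfl⟩
  simpa using key

theorem eventually_deriv_lt_of_tendsto_div_self {w w'' : ℝ → ℝ} {ε : ℝ} (hε : 0 < ε)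
    (hw : Differentiable ℝ w) (hlin : Tendsto (fun x => w x / x) atTop (𝓝 0))
    (hw'' : ∀ᶠ x in atTop, HasDerivAt (deriv w) (w'' x) x ∧ (deriv w x = ε → 0 < w'' x)) :
    ∀ᶠ x in atTop, deriv w x < ε := by
  obtain ⟨X, hX⟩ := eventually_atTop.1 hw''
  by_contra hcon
  obtain ⟨x₀, hXx₀, hεx₀⟩ := frequently_atTop.1 (not_eventually.1 hcon) X
  have hstay : ∀ x ≥ x₀, ε ≤ deriv w x := fun x hx =>
    le_image_of_deriv_pos_at_boundary (fun y hy => (hX y (hXx₀.trans hy)).1) (not_lt.1 hεx₀)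
      (fun y hy => (hX y (hXx₀.trans hy)).2) hx
  have hgrowth : ∀ x ≥ x₀, w x₀ + ε * (x - x₀) ≤ w x := fun x hx => by
    have := (convex_Ici x₀).mul_sub_le_image_sub_of_le_deriv hw.continuous.continuousOn
      hw.differentiableOn (fun y hy => hstay y (interior_subset hy)) x₀ self_mem_Ici x hx hx
    linarith
  have hlower : Tendsto (fun x => (w x₀ + ε * (x - x₀)) / x) atTop (𝓝 ε) := by
    have := tendsto_const_nhds (x := ε).add
      (tendsto_const_nhds (x := w x₀ - ε * x₀).mul tendsto_inv_atTop_zero)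
    rw [mul_zero, add_zero] at this
    refine this.congr' ?_
    filter_upwards [eventually_ne_atTop 0] with x hx
    field_simp
    ring
  have : ε ≤ 0 := le_of_tendsto_of_tendsto hlower hlin <| by
    filter_upwards [eventually_ge_atTop x₀, eventually_gt_atTop 0] with x hx hx0
    exact div_le_div_of_nonneg_right (hgrowth x hx) hx0.le
  linarith

theorem tendsto_div_self_of_tendsto_div_rpow {u : ℝ → ℝ} {p K : ℝ} (hp : p < 1)
    (hu : Tendsto (fun x => u x / x ^ p) atTop (𝓝 K)) :
    Tendsto (fun x => u x / x) atTop (𝓝 0) := by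
  have := hu.mul (tendsto_rpow_neg_atTop (sub_pos.2 hp))
  rw [mul_zero] at this
  refine this.congr' ?_
  filter_upwards [eventually_gt_atTop 0] with x hx
  have : x ^ p ≠ 0 := (Real.rpow_pos_of_pos hx p).ne'
  rw [Real.rpow_neg hx.le, Real.rpow_sub hx, Real.rpow_one]
  field_simp

theorem tendsto_rpow_div_self_atTop {u : ℝ → ℝ} {p q K : ℝ} (hK : 0 < K) (hpq : 1 < p * q)
    (hu : Tendsto (fun x => u x / x ^ p) atTop (𝓝 K)) :
    Tendsto (fun x => u x ^ q / x) atTop atTop := by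
  have := (hu.rpow_const (Or.inl hK.ne')).pos_mul_atTop (Real.rpow_pos_of_pos hK q)
    (tendsto_rpow_atTop (sub_pos.2 hpq))
  refine this.congr' ?_
  filter_upwards [eventually_gt_atTop 0, hu.eventually (lt_mem_nhds hK)] with x hx hux
  have hxp : 0 < x ^ p := Real.rpow_pos_of_pos hx p
  have hu0 : 0 < u x := (div_pos_iff_of_pos_right hxp).1 hux
  have : x ^ (p * q) ≠ 0 := (Real.rpow_pos_of_pos hx _).ne'
  rw [Real.div_rpow hu0.le hxp.le, ← Real.rpow_mul hx.le, Real.rpow_sub hx, Real.rpow_one]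
  field_simp

theorem hasDerivAt_deriv_of_ode {u : ℝ → ℝ} {m c l x : ℝ} (hu : Differentiable ℝ u)
    (hode : ∀ x, deriv u x = -x ^ 2 + l + c * |u x| ^ m) (hx : 0 < u x) :
    HasDerivAt (deriv u) (-2 * x + c * (deriv u x * m * u x ^ (m - 1))) x := by
  have hloc : deriv u =ᶠ[𝓝 x] fun y => -y ^ 2 + l + c * u y ^ m := by
    filter_upwards [continuousAt_const.eventually_lt hu.continuous.continuousAt hx] with y hy
    rw [hode, abs_of_pos hy]
  have := ((hasDerivAt_pow 2 x).neg.add_const l).add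
    (((hu x).hasDerivAt.rpow_const (p := m) (Or.inl hx.ne')).const_mul c)
  exact (this.congr_of_eventuallyEq hloc).congr_deriv (by ring)

theorem tendsto_deriv_atTop_of_ode {u : ℝ → ℝ} {m c l K : ℝ} (hm : 2 < m) (hc : 0 < c)
    (hK : 0 < K) (hu : Differentiable ℝ u) (hode : ∀ x, deriv u x = -x ^ 2 + l + c * |u x| ^ m)
    (htop : Tendsto (fun x => u x / x ^ (2 / m)) atTop (𝓝 K)) :
    Tendsto (deriv u) atTop (𝓝 0) := by
  have hm0 : 0 < m := by linarith
  have hlin := tendsto_div_self_of_tendsto_div_rpow (by rw [div_lt_one hm0]; linarith) htop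
  have hpow := tendsto_rpow_div_self_atTop (q := m - 1) hK
    (by rw [div_mul_eq_mul_div, one_lt_div hm0]; linarith) htop
  have hpos : ∀ᶠ x in atTop, 0 < x ∧ 0 < u x := by
    filter_upwards [eventually_gt_atTop 0, htop.eventually (lt_mem_nhds hK)] with x hx hux
    exact ⟨hx, (div_pos_iff_of_pos_right (Real.rpow_pos_of_pos hx _)).1 hux⟩
  have hderiv : ∀ᶠ x in atTop,
      HasDerivAt (deriv u) (-2 * x + c * (deriv u x * m * u x ^ (m - 1))) x :=
    hpos.mono fun x hx => hasDerivAt_deriv_of_ode hu hode hx.2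
  refine tendsto_order.2 ⟨fun a ha => ?_, fun ε hε => ?_⟩
  · have hlin' : Tendsto (fun x => (-u) x / x) atTop (𝓝 0) := by
      simpa [neg_div] using hlin.neg
    have hbelow := eventually_deriv_lt_of_tendsto_div_self (neg_pos.2 ha) hu.neg hlin' <| by
      filter_upwards [hpos, hderiv] with x hx hd
      rw [deriv.neg']
      refine ⟨hd.neg, fun h => ?_⟩
      have hux : 0 < u x ^ (m - 1) := Real.rpow_pos_of_pos hx.2 _
      have hna : 0 < -a := neg_pos.2 ha
      have hterm : 0 < c * (-a * m * u x ^ (m - 1)) := by positivity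
      rw [neg_inj.1 h]
      linarith
    simpa [deriv.neg', neg_lt_neg_iff] using hbelow
  · refine eventually_deriv_lt_of_tendsto_div_self
      (w'' := fun x => -2 * x + c * (deriv u x * m * u x ^ (m - 1))) hε hu hlin ?_
    filter_upwards [hpos, hderiv, hpow.eventually_gt_atTop (2 / (c * m * ε))]
      with x hx hd hbig
    refine ⟨hd, fun h => ?_⟩
    rw [div_lt_div_iff₀ (by positivity) hx.1] at hbig
    rw [h]
    linarith

theorem tendsto_deriv_atBot_of_ode {u : ℝ → ℝ} {m c l K : ℝ} (hm : 2 < m) (hc : 0 < c)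
    (hK : 0 < K) (hu : Differentiable ℝ u) (hode : ∀ x, deriv u x = -x ^ 2 + l + c * |u x| ^ m)
    (hbot : Tendsto (fun x => u x / |x| ^ (2 / m)) atBot (𝓝 (-K))) :
    Tendsto (deriv u) atBot (𝓝 0) := by
  set v : ℝ → ℝ := fun x => -u (-x) with hv_def
  have hv : Differentiable ℝ v := (hu.comp differentiable_neg).neg
  have hdv : ∀ x, deriv v x = deriv u (-x) := fun x => by
    rw [hv_def, deriv.fun_neg, deriv_comp_neg (f := u), neg_neg]
  have hvode : ∀ x, deriv v x = -x ^ 2 + l + c * |v x| ^ m := fun x => by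
    rw [hdv, hode, neg_sq, hv_def, abs_neg]
  have hvtop : Tendsto (fun x => v x / x ^ (2 / m)) atTop (𝓝 K) := by
    have := (hbot.comp tendsto_neg_atTop_atBot).neg
    rw [neg_neg] at this
    refine this.congr' ?_
    filter_upwards [eventually_ge_atTop 0] with x hx
    simp [hv_def, abs_of_nonneg hx, neg_div]
  refine ((tendsto_deriv_atTop_of_ode hm hc hK hv hvode hvtop).comp
    tendsto_neg_atBot_atTop).congr fun x => ?_
  simp [hdv]

theorem stmt2_general (m lamm : ℝ) (hm : 2 < m) (φ : ℝ → ℝ)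
    (hC2 : ContDiff ℝ 2 φ)
    (hODE : ∀ x : ℝ, deriv (deriv φ) x =
      -x ^ 2 + lamm + m ^ (-m) * (m - 1) ^ (m - 1) * |deriv φ x| ^ m)
    (htop : Tendsto (fun x => deriv φ x / x ^ (2 / m)) atTop
      (𝓝 (m * (m - 1) ^ (1 / m - 1))))
    (hbot : Tendsto (fun x => deriv φ x / |x| ^ (2 / m)) atBot
      (𝓝 (-(m * (m - 1) ^ (1 / m - 1))))) :
    Tendsto (deriv (deriv φ)) (cocompact ℝ) (𝓝 0) := by
  have hm0 : 0 < m := by linarith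
  have hm1 : 0 < m - 1 := by linarith
  have hc : 0 < m ^ (-m) * (m - 1) ^ (m - 1) :=
    mul_pos (Real.rpow_pos_of_pos hm0 _) (Real.rpow_pos_of_pos hm1 _)
  have hK : 0 < m * (m - 1) ^ (1 / m - 1) := mul_pos hm0 (Real.rpow_pos_of_pos hm1 _)
  have hu := hC2.differentiable_deriv_two
  rw [cocompact_eq_atBot_atTop]
  exact tendsto_sup.2 ⟨tendsto_deriv_atBot_of_ode hm hc hK hu hODE hbot,
    tendsto_deriv_atTop_of_ode hm hc hK hu hODE htop⟩

/-- The second derivative of the solution of the one-dimensional first corrector ODE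
tends to `0` as `|x| → ∞`. -/
theorem stmt2 (m lamm : ℝ) (hm : 2 < m) (φ : ℝ → ℝ)
    (hconv : ConvexOn ℝ Set.univ φ) (hC2 : ContDiff ℝ 2 φ)
    (hODE : ∀ x : ℝ, deriv (deriv φ) x =
      -x ^ 2 + lamm + m ^ (-m) * (m - 1) ^ (m - 1) * |deriv φ x| ^ m)
    (htop : Tendsto (fun x => deriv φ x / x ^ (2 / m)) atTop
      (𝓝 (m * (m - 1) ^ (1 / m - 1))))
    (hbot : Tendsto (fun x => deriv φ x / |x| ^ (2 / m)) atBot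
      (𝓝 (-(m * (m - 1) ^ (1 / m - 1))))) :
    Tendsto (deriv (deriv φ)) (cocompact ℝ) (𝓝 0) :=
  stmt2_general m lamm hm φ hC2 hODE htop hbot
end

section
/- Let d ≥ 1, m > 2, m^* := 1/(3m−2), R ∈ (0,1), κ > 0, T > 0, λ ∈ ℝ, let μ ∈ ℝ^d, r ∈ ℝ, let A := σσ^⊤ be positive definite with square root 𝔖 := A^{1/2}, set π := (1/R)A^{−1}(μ−r𝟙), and let g : [0,T] → (0,∞) be continuous. Let Σ be the d×d matrix whose i-th column is π_i R 𝔖(π − e_i). Suppose ϖ̃ : ℝ^d → ℝ is twice continuously differentiable and satisfies (R/2)|x|² − (1/m) Σ_{j=1}^d κ^{1−m} |∂_j ϖ̃(x)|^m + (1/(2R²)) Tr(D²ϖ̃(x) (Σ𝔖)^⊤(Σ𝔖)) = λ for every x ∈ ℝ^d. Define ϖ(t,w,s,ξ) := g(t) w^{1−R+4m^*} ϖ̃(w^{−1−m^*} 𝔖(ξ×s)) and a(t,w,s) := λ g(t) w^{3mm^*−R}. Then for every (t,w,s,ξ) ∈ [0,T]×(0,∞)×(0,∞)^d×ℝ^d: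 (R g(t) w^{−R−1}/2) |𝔖(ξ×s)|² − (g(t)w^{−R})^{1−m} Φ(s, −∇_ξ ϖ(t,w,s,ξ)) + (1/2) Σ_{i,j=1}^d c^{h⁰}_{ij}(w,s) ∂²_{ξ_i ξ_j} ϖ(t,w,s,ξ) = a(t,w,s). -/
/-!
Write `B = w^{-1-m*} 𝔖 diag(s)`, so that `x = B ξ`. Then `ϖ(t,w,s,·)` is a constant multiple of
`ϖ̃ ∘ B`, whose gradient and Hessian are `Bᵀ ∇ϖ̃` and `Bᵀ D²ϖ̃ B`. The symmetry of `𝔖` turns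
`𝔖⁻¹ (∇_ξ ϖ / s)` into a multiple of `∇ϖ̃`, and since `μ - r𝟙 = R A π` the covariation `c^{h⁰}` is
`w² / (R² sᵢ sⱼ)` times the Gram matrix `ΣᵀΣ`, so that the diffusion term becomes the trace of
`D²ϖ̃` against `(Σ𝔖)ᵀ(Σ𝔖)`. Each of the three terms is then `g(t) w^{3mm*-R}` times the matching
term of the reduced equation at `x`: the powers of `w` agree because `m* (3m - 2) = 1`.
-/

open Finset Matrix

section CoordinateCalculus

variable {𝕜 : Type*} [NontriviallyNormedField 𝕜] {m n : Type*} [DecidableEq n]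

noncomputable def coordGrad (f : (n → 𝕜) → 𝕜) (x : n → 𝕜) : n → 𝕜 :=
  fun j => fderiv 𝕜 f x (Pi.single j 1)

noncomputable def coordHessian (f : (n → 𝕜) → 𝕜) (x : n → 𝕜) : Matrix n n 𝕜 :=
  of fun i j => coordGrad (fun y => coordGrad f y j) x i

theorem coordHessian_apply (f : (n → 𝕜) → 𝕜) (x : n → 𝕜) (i j : n) :
    coordHessian f x i j = coordGrad (fun y => coordGrad f y j) x i :=
  rfl

variable [Fintype n]

theorem coordGrad_const_mul (a : 𝕜) (f : (n → 𝕜) → 𝕜) (x : n → 𝕜) :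
    coordGrad (fun y => a * f y) x = a • coordGrad f x := by
  ext j
  change fderiv 𝕜 (a • f) x _ = _
  rw [fderiv_const_smul_field]
  rfl

theorem coordHessian_const_mul (a : 𝕜) (f : (n → 𝕜) → 𝕜) (x : n → 𝕜) :
    coordHessian (fun y => a * f y) x = a • coordHessian f x := by
  ext i j
  simp only [coordHessian, of_apply, Matrix.smul_apply, coordGrad_const_mul, Pi.smul_apply,
    smul_eq_mul]

theorem fderiv_apply_eq_dotProduct_coordGrad (f : (n → 𝕜) → 𝕜) (x v : n → 𝕜) :
    fderiv 𝕜 f x v = v ⬝ᵥ coordGrad f x := by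
  conv_lhs => rw [← univ_sum_single v]
  rw [map_sum]
  refine sum_congr rfl fun j _ => ?_
  change _ = v j • fderiv 𝕜 f x (Pi.single j 1)
  rw [← map_smul, ← Pi.single_smul', smul_eq_mul, mul_one]

theorem coordGrad_dotProduct {p : Type*} [Fintype p] (v : p → 𝕜) {F : (n → 𝕜) → p → 𝕜}
    {x : n → 𝕜} (hF : ∀ k, DifferentiableAt 𝕜 (fun z => F z k) x) :
    coordGrad (fun z => v ⬝ᵥ F z) x = ∑ k, v k • coordGrad (fun z => F z k) x := by
  ext l
  simp only [coordGrad, dotProduct]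
  rw [fderiv_fun_sum fun k _ => (hF k).const_mul (v k)]
  simp [fderiv_const_mul (hF _), coordGrad]

theorem differentiable_coordGrad {f : (n → 𝕜) → 𝕜} (hf : ContDiff 𝕜 2 f) (k : n) :
    Differentiable 𝕜 fun z => coordGrad f z k :=
  ((hf.fderiv_right (by norm_num)).differentiable one_ne_zero).clm_apply
    (differentiable_const _)

variable [Fintype m] [DecidableEq m] [CompleteSpace 𝕜]

theorem coordGrad_comp_mulVec {f : (m → 𝕜) → 𝕜} (B : Matrix m n 𝕜) {x : n → 𝕜}
    (hf : DifferentiableAt 𝕜 f (B *ᵥ x)) :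
    coordGrad (fun y => f (B *ᵥ y)) x = Bᵀ *ᵥ coordGrad f (B *ᵥ x) := by
  let L : (n → 𝕜) →L[𝕜] (m → 𝕜) := LinearMap.toContinuousLinearMap B.mulVecLin
  have hL : fderiv 𝕜 (fun y => f (B *ᵥ y)) x = (fderiv 𝕜 f (B *ᵥ x)).comp L :=
    (hf.hasFDerivAt.comp x L.hasFDerivAt).fderiv
  ext j
  rw [coordGrad, hL, ContinuousLinearMap.comp_apply, fderiv_apply_eq_dotProduct_coordGrad]
  simp only [L, LinearMap.coe_toContinuousLinearMap', mulVecLin_apply, mulVec_single_one]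
  rfl

theorem coordHessian_comp_mulVec {f : (m → 𝕜) → 𝕜} (hf : ContDiff 𝕜 2 f)
    (B : Matrix m n 𝕜) (x : n → 𝕜) :
    coordHessian (fun y => f (B *ᵥ y)) x = Bᵀ * coordHessian f (B *ᵥ x) * B := by
  ext i j
  have hgrad : (fun y => coordGrad (fun y => f (B *ᵥ y)) y j)
      = fun y => (fun k => B k j) ⬝ᵥ coordGrad f (B *ᵥ y) := by
    funext y
    rw [coordGrad_comp_mulVec B (hf.differentiable (by norm_num) _)]
    rfl
  have hdiff : DifferentiableAt 𝕜 (fun z => (fun k => B k j) ⬝ᵥ coordGrad f z) (B *ᵥ x) :=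
    .fun_sum fun k _ => (differentiable_coordGrad hf k _).const_mul _
  simp only [coordHessian, of_apply]
  rw [hgrad, coordGrad_comp_mulVec B hdiff,
    coordGrad_dotProduct _ fun k => differentiable_coordGrad hf k _]
  simp only [mulVec, dotProduct, mul_apply, transpose_apply, Finset.sum_apply, Pi.smul_apply,
    smul_eq_mul, of_apply, mul_sum, sum_mul]
  rw [sum_comm]
  exact sum_congr rfl fun _ _ => sum_congr rfl fun _ _ => by ring

end CoordinateCalculus

section MatrixIdentities

variable {α : Type*} [CommRing α] {m n : Type*}

theorem transpose_mul_self_apply_of_cols [Fintype m] (a : n → α) (u : n → m → α) (i j : n) :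
    ((of fun k i => a i * u i k)ᵀ * of fun k i => a i * u i k) i j = a i * a j * (u i ⬝ᵥ u j) := by
  simp only [mul_apply, transpose_apply, of_apply, dotProduct, mul_sum]
  exact sum_congr rfl fun _ _ => by ring

theorem sum_sum_mul_mul_eq_dotProduct_mulVec [Fintype m] [Fintype n] (x : m → α)
    (M : Matrix m n α) (y : n → α) :
    ∑ k, ∑ l, x k * M k l * y l = x ⬝ᵥ (M *ᵥ y) := by
  simp only [dotProduct, mulVec, mul_sum, mul_assoc]

theorem sum_sum_mul_transpose_mul_mul_apply [Fintype m] [Fintype n] (X : Matrix n n α)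
    (H : Matrix m m α) (P : Matrix m n α) :
    ∑ i, ∑ j, X i j * (Pᵀ * H * P) i j = ∑ i, ∑ j, H i j * (P * Xᵀ * Pᵀ) j i := by
  have lhs : ∑ i, ∑ j, X i j * (Pᵀ * H * P) i j = trace (Xᵀ * (Pᵀ * H * P)) := by
    simp only [trace, diag_apply, mul_apply (M := Xᵀ), transpose_apply]
    exact sum_comm
  have rhs : ∑ i, ∑ j, H i j * (P * Xᵀ * Pᵀ) j i = trace (H * (P * Xᵀ * Pᵀ)) := by
    simp only [trace, diag_apply, mul_apply (M := H)]
  rw [lhs, rhs, trace_mul_comm, Matrix.mul_assoc, Matrix.mul_assoc, trace_mul_comm]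
  simp only [Matrix.mul_assoc]

theorem smul_mul_diagonal_mulVec [Fintype n] [DecidableEq n] (c : α) (S : Matrix m n α)
    (s ξ : n → α) :
    (c • (S * diagonal s)) *ᵥ ξ = fun k => c * (S *ᵥ fun i => ξ i * s i) k := by
  ext k
  rw [smul_mulVec, ← mulVec_mulVec, Pi.smul_apply, smul_eq_mul]
  congr 2
  ext i
  rw [mulVec_diagonal, mul_comm]

theorem transpose_smul_mul_diagonal_mul_apply [Fintype m] [Fintype n] [DecidableEq n] (c : α)
    (S : Matrix m n α) (H : Matrix m m α) (s : n → α) (i j : n) :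
    ((c • (S * diagonal s))ᵀ * H * (c • (S * diagonal s))) i j
      = c ^ 2 * s i * s j * (Sᵀ * H * S) i j := by
  rw [transpose_smul, transpose_mul, diagonal_transpose, Matrix.smul_mul, Matrix.smul_mul,
    Matrix.mul_smul, smul_smul, Matrix.smul_apply,
    show diagonal s * Sᵀ * H * (S * diagonal s) = diagonal s * (Sᵀ * H * S) * diagonal s by
      simp only [Matrix.mul_assoc],
    mul_diagonal, diagonal_mul, smul_eq_mul]
  ring

end MatrixIdentities

section SymmetricSquareRoot

variable {K : Type*} [Field K] {n : Type*} [Fintype n] [DecidableEq n] {S : Matrix n n K}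

theorem inv_mulVec_div_transpose_smul_mul_diagonal (hSt : Sᵀ = S) (hS : IsUnit S.det)
    {s : n → K} (hs : ∀ i, s i ≠ 0) (a c : K) (v : n → K) :
    S⁻¹ *ᵥ (fun i => (a • ((c • (S * diagonal s))ᵀ *ᵥ v)) i / s i) = (a * c) • v := by
  have hdiv : (fun i => (a • ((c • (S * diagonal s))ᵀ *ᵥ v)) i / s i) = (a * c) • (S *ᵥ v) := by
    ext i
    simp only [transpose_smul, transpose_mul, diagonal_transpose, hSt, smul_mulVec,
      ← mulVec_mulVec, Pi.smul_apply, mulVec_diagonal, smul_eq_mul]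
    field_simp [hs i]
  rw [hdiv, mulVec_smul, mulVec_mulVec, nonsing_inv_mul S hS, one_mulVec]

-- Since `R A π = b`, each vector `b - R A eᵢ` equals `R A (π - eᵢ)`, so the `A⁻¹`-form collapses
-- to `R² (S (π - eᵢ)) ⬝ᵥ (S (π - eⱼ))`, an entry of a Gram matrix.
theorem mul_sum_sum_sub_mul_inv_mul_sub {A Sig : Matrix n n K} (hSt : Sᵀ = S) (hS : IsUnit S.det)
    (hA : A = S * S) {R : K} (hR : R ≠ 0) {b π : n → K} (hπ : π = (1 / R) • (A⁻¹ *ᵥ b))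
    (hSig : Sig = of fun k i => π i * R * (S *ᵥ (π - Pi.single i 1)) k) (i j : n) :
    π i * π j * ∑ k, ∑ l, (b k - R * A k i) * A⁻¹ k l * (b l - R * A l j) = (Sigᵀ * Sig) i j := by
  subst hA hSig
  have hA : IsUnit (S * S).det := by rw [det_mul]; exact hS.mul hS
  have hb : R • ((S * S) *ᵥ π) = b := by
    rw [hπ, mulVec_smul, mulVec_mulVec, mul_nonsing_inv _ hA, one_mulVec, smul_smul,
      mul_one_div_cancel hR, one_smul]
  have hcol : ∀ i, (fun k => b k - R * (S * S) k i) = R • ((S * S) *ᵥ (π - Pi.single i 1)) := by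
    intro i
    ext k
    simp [← hb, mulVec_sub, mul_sub]
  rw [sum_sum_mul_mul_eq_dotProduct_mulVec (fun k => b k - R * (S * S) k i), hcol, hcol,
    mulVec_smul, mulVec_mulVec, nonsing_inv_mul _ hA, one_mulVec, smul_dotProduct,
    dotProduct_smul, ← mulVec_mulVec, dotProduct_comm, dotProduct_mulVec, ← mulVec_transpose,
    hSt, transpose_mul_self_apply_of_cols]
  simp only [smul_eq_mul, dotProduct_comm]
  ring

end SymmetricSquareRoot

/-- The matrix of the change of variables `ξ ↦ w^{-1-m*} 𝔖 (ξ × s)`. -/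
noncomputable def reductionMatrix {n : Type*} [Fintype n] [DecidableEq n] (mstar w : ℝ)
    (S : Matrix n n ℝ) (s : n → ℝ) : Matrix n n ℝ :=
  w ^ (-(1 + mstar)) • (S * diagonal s)

section CorrectorTerms

variable {n : Type*} [Fintype n] [DecidableEq n] {S : Matrix n n ℝ} {s : n → ℝ}
  {f : (n → ℝ) → ℝ}

theorem sum_abs_inv_mulVec_neg_coordGrad_comp_div_rpow (hSt : Sᵀ = S) (hS : IsUnit S.det)
    (hs : ∀ i, s i ≠ 0) {K c : ℝ} (hKc : 0 < K * c) (hf : Differentiable ℝ f)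
    (ξ : n → ℝ) (p : ℝ) :
    ∑ j, |(S⁻¹ *ᵥ fun i =>
        -coordGrad (fun ζ => K * f ((c • (S * diagonal s)) *ᵥ ζ)) ξ i / s i) j| ^ p
      = (K * c) ^ p * ∑ j, |coordGrad f ((c • (S * diagonal s)) *ᵥ ξ) j| ^ p := by
  have hgrad : (fun i => -coordGrad (fun ζ => K * f ((c • (S * diagonal s)) *ᵥ ζ)) ξ i / s i)
      = fun i => ((-K) • ((c • (S * diagonal s))ᵀ *ᵥ coordGrad f ((c • (S * diagonal s)) *ᵥ ξ))) i
        / s i := by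
    rw [coordGrad_const_mul, coordGrad_comp_mulVec _ (hf _), neg_smul]
    rfl
  rw [hgrad, inv_mulVec_div_transpose_smul_mul_diagonal hSt hS hs, mul_sum]
  simp only [Pi.smul_apply, smul_eq_mul, abs_mul, neg_mul, abs_neg, abs_of_pos hKc,
    Real.mul_rpow hKc.le (abs_nonneg _)]

theorem sum_sum_div_mul_coordHessian_comp (hs : ∀ i, s i ≠ 0) (hf : ContDiff ℝ 2 f) (K c : ℝ)
    (X : Matrix n n ℝ) (ξ : n → ℝ) :
    ∑ i, ∑ j, X i j / (s i * s j)
        * coordHessian (fun ζ => K * f ((c • (S * diagonal s)) *ᵥ ζ)) ξ i j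
      = K * c ^ 2 * ∑ i, ∑ j,
          coordHessian f ((c • (S * diagonal s)) *ᵥ ξ) i j * (S * Xᵀ * Sᵀ) j i := by
  rw [coordHessian_const_mul, coordHessian_comp_mulVec hf, ← sum_sum_mul_transpose_mul_mul_apply,
    mul_sum]
  refine sum_congr rfl fun i _ => ?_
  rw [mul_sum]
  refine sum_congr rfl fun j _ => ?_
  rw [Matrix.smul_apply, transpose_smul_mul_diagonal_mul_apply, smul_eq_mul]
  field_simp [hs i, hs j]

variable {G w m R κ mstar : ℝ}

theorem reductionMatrix_mulVec (ξ : n → ℝ) :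
    reductionMatrix mstar w S s *ᵥ ξ = fun k => w ^ (-(1 + mstar)) * (S *ᵥ fun i => ξ i * s i) k :=
  smul_mul_diagonal_mulVec _ S s ξ

theorem quadratic_term_eq_reduced (hw : 0 < w) (hms : mstar * (3 * m - 2) = 1) (ξ : n → ℝ) :
    R * G * w ^ (-R - 1) / 2 * ∑ k, (S *ᵥ fun i => ξ i * s i) k ^ 2
      = G * w ^ (3 * m * mstar - R) * (R / 2 * ∑ k, (reductionMatrix mstar w S s *ᵥ ξ) k ^ 2) := by
  have hweight : w ^ (3 * m * mstar - R) * (w ^ (-(1 + mstar))) ^ 2 = w ^ (-R - 1) := by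
    rw [← Real.rpow_natCast, ← Real.rpow_mul hw.le, ← Real.rpow_add hw]
    congr 1
    push_cast
    linear_combination hms
  simp only [reductionMatrix_mulVec, mul_pow, ← mul_sum, ← hweight]
  ring

theorem price_impact_term_eq_reduced (hSt : Sᵀ = S) (hS : IsUnit S.det) (hs : ∀ i, s i ≠ 0)
    (hG : 0 < G) (hw : 0 < w) (hκ : 0 < κ) (hf : Differentiable ℝ f) (ξ : n → ℝ) :
    (G * w ^ (-R)) ^ (1 - m) * (1 / (m * κ ^ (m - 1)) * ∑ j, |(S⁻¹ *ᵥ fun i =>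
        -coordGrad (fun ζ => G * w ^ (1 - R + 4 * mstar) * f (reductionMatrix mstar w S s *ᵥ ζ))
          ξ i / s i) j| ^ m)
      = G * w ^ (3 * m * mstar - R)
        * (1 / m * ∑ j, κ ^ (1 - m) * |coordGrad f (reductionMatrix mstar w S s *ᵥ ξ) j| ^ m) := by
  have hweight : (G * w ^ (-R)) ^ (1 - m) * (G * w ^ (1 - R + 4 * mstar) * w ^ (-(1 + mstar))) ^ m
      = G * w ^ (3 * m * mstar - R) := by
    rw [mul_assoc, ← Real.rpow_add hw, Real.mul_rpow hG.le (by positivity),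
      Real.mul_rpow hG.le (by positivity), ← Real.rpow_mul hw.le, ← Real.rpow_mul hw.le,
      mul_mul_mul_comm, ← Real.rpow_add hG, ← Real.rpow_add hw, sub_add_cancel, Real.rpow_one]
    ring_nf
  rw [reductionMatrix, sum_abs_inv_mulVec_neg_coordGrad_comp_div_rpow hSt hS hs (by positivity) hf,
    ← reductionMatrix, ← mul_sum, ← hweight, ← neg_sub m 1, Real.rpow_neg hκ.le]
  field_simp

theorem diffusion_term_eq_reduced (hs : ∀ i, s i ≠ 0) (hf : ContDiff ℝ 2 f) (hw : 0 < w)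
    (hms : mstar * (3 * m - 2) = 1) (X : Matrix n n ℝ) (ξ : n → ℝ) :
    1 / 2 * ∑ i, ∑ j, w ^ 2 / R ^ 2 * (X i j / (s i * s j)) * coordHessian
        (fun ζ => G * w ^ (1 - R + 4 * mstar) * f (reductionMatrix mstar w S s *ᵥ ζ)) ξ i j
      = G * w ^ (3 * m * mstar - R) * (1 / (2 * R ^ 2) * ∑ i, ∑ j,
          coordHessian f (reductionMatrix mstar w S s *ᵥ ξ) i j * (S * Xᵀ * Sᵀ) j i) := by
  have hweight : w ^ (1 - R + 4 * mstar) * (w ^ (-(1 + mstar))) ^ 2 * w ^ 2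
      = w ^ (3 * m * mstar - R) := by
    rw [← Real.rpow_natCast, ← Real.rpow_natCast, ← Real.rpow_mul hw.le, ← Real.rpow_add hw,
      ← Real.rpow_add hw]
    congr 1
    push_cast
    linear_combination (-1 : ℝ) * hms
  simp only [mul_assoc (w ^ 2 / R ^ 2), ← mul_sum]
  rw [reductionMatrix, sum_sum_div_mul_coordHessian_comp hs hf, ← reductionMatrix, ← hweight]
  ring

end CorrectorTerms

theorem stmt13_general (d : ℕ) (m R κ T lam r : ℝ) (hm : 2 < m)
    (hR : R ∈ Set.Ioo (0 : ℝ) 1) (hκ : 0 < κ)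
    (μ : Fin d → ℝ)
    (S : Matrix (Fin d) (Fin d) ℝ) (hS : S.PosDef)
    (g : ℝ → ℝ)
    (hgpos : ∀ t ∈ Set.Icc (0 : ℝ) T, 0 < g t)
    (tw : (Fin d → ℝ) → ℝ) (htw : ContDiff ℝ 2 tw) :
    let mstar : ℝ := 1 / (3 * m - 2)
    let A : Matrix (Fin d) (Fin d) ℝ := S * S
    let piv : Fin d → ℝ := fun i => (1 / R) * ∑ j, A⁻¹ i j * (μ j - r)
    let Sig : Matrix (Fin d) (Fin d) ℝ :=
      Matrix.of fun k i => piv i * R *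
        (S.mulVec (fun l => piv l - (Pi.single i 1 : Fin d → ℝ) l)) k
    let M : Matrix (Fin d) (Fin d) ℝ := (Sig * S).transpose * (Sig * S)
    let D1 : ((Fin d → ℝ) → ℝ) → (Fin d → ℝ) → Fin d → ℝ :=
      fun f x j => fderiv ℝ f x (Pi.single j 1)
    (∀ x : Fin d → ℝ,
      R / 2 * (∑ i, x i ^ 2) - (1 / m) * (∑ j, κ ^ (1 - m) * |D1 tw x j| ^ m)
        + (1 / (2 * R ^ 2)) * ∑ i, ∑ j, D1 (fun y => D1 tw y j) x i * M j i = lam) →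
    let Φ : (Fin d → ℝ) → (Fin d → ℝ) → ℝ := fun s x =>
      (1 / (m * κ ^ (m - 1))) * ∑ j, |S⁻¹.mulVec (fun i => x i / s i) j| ^ m
    let ch0 : ℝ → (Fin d → ℝ) → Fin d → Fin d → ℝ := fun w s i j =>
      w ^ 2 * piv i * piv j / (R ^ 2 * s i * s j) *
        ∑ k, ∑ l, (μ k - r - R * A k i) * A⁻¹ k l * (μ l - r - R * A l j)
    let vpi : ℝ → ℝ → (Fin d → ℝ) → (Fin d → ℝ) → ℝ := fun t w s ξ =>
      g t * w ^ (1 - R + 4 * mstar) *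
        tw (fun k => w ^ (-(1 + mstar)) * S.mulVec (fun i => ξ i * s i) k)
    ∀ t ∈ Set.Icc (0 : ℝ) T, ∀ w : ℝ, 0 < w → ∀ s : Fin d → ℝ, (∀ i, 0 < s i) →
      ∀ ξ : Fin d → ℝ,
        R * g t * w ^ (-R - 1) / 2 * (∑ k, S.mulVec (fun i => ξ i * s i) k ^ 2)
          - (g t * w ^ (-R)) ^ (1 - m) * Φ s (fun j => -(D1 (vpi t w s) ξ j))
          + (1 / 2) * ∑ i, ∑ j, ch0 w s i j * D1 (fun ξ' => D1 (vpi t w s) ξ' j) ξ i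
        = lam * g t * w ^ (3 * m * mstar - R) := by
  intro mstar A piv Sig M D1 hred Φ ch0 vpi t ht w hw s hs ξ
  have hSt : Sᵀ = S := by simpa using hS.isHermitian.eq
  have hSdet : IsUnit S.det := (isUnit_iff_isUnit_det S).mp hS.isUnit
  have hs0 : ∀ i, s i ≠ 0 := fun i => (hs i).ne'
  have hms : mstar * (3 * m - 2) = 1 := one_div_mul_cancel (by linarith)
  have hvpi : vpi t w s
      = fun ζ => g t * w ^ (1 - R + 4 * mstar) * tw (reductionMatrix mstar w S s *ᵥ ζ) := by
    simp only [vpi, reductionMatrix_mulVec]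
  have hch0 : ∀ i j, ch0 w s i j = w ^ 2 / R ^ 2 * ((Sigᵀ * Sig) i j / (s i * s j)) := by
    intro i j
    rw [← mul_sum_sum_sub_mul_inv_mul_sub (A := A) (Sig := Sig) hSt hSdet rfl hR.1.ne'
      (b := fun k => μ k - r) (π := piv) rfl rfl]
    simp only [ch0]
    field_simp
  have hM : S * (Sigᵀ * Sig)ᵀ * Sᵀ = M := by
    simp only [M, transpose_mul, transpose_transpose, hSt, Matrix.mul_assoc]
  have hD1 : D1 = coordGrad := rfl
  simp only [Φ, hch0, hD1, ← coordHessian_apply, hvpi] at hred ⊢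
  rw [quadratic_term_eq_reduced hw hms,
    price_impact_term_eq_reduced hSt hSdet hs0 (hgpos t ht) hw hκ (htw.differentiable two_ne_zero),
    diffusion_term_eq_reduced hs0 htw hw hms, hM, mul_assoc lam, ← hred]
  ring

/-- Factorization of the first corrector equation in the Black–Scholes example: if `ϖ̃` solves
the reduced equation, then `ϖ(t,w,s,ξ) = g(t) w^{1−R+4m*} ϖ̃(w^{−1−m*}𝔖(ξ×s))` together with
`a(t,w,s) = λ g(t) w^{3mm*−R}` solves the first corrector equation. -/
theorem stmt13 (d : ℕ) (hd : 1 ≤ d) (m R κ T lam r : ℝ) (hm : 2 < m)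
    (hR : R ∈ Set.Ioo (0 : ℝ) 1) (hκ : 0 < κ) (hT : 0 < T)
    (μ : Fin d → ℝ)
    (S : Matrix (Fin d) (Fin d) ℝ) (hS : S.PosDef)
    (g : ℝ → ℝ) (hg : ContinuousOn g (Set.Icc 0 T))
    (hgpos : ∀ t ∈ Set.Icc (0 : ℝ) T, 0 < g t)
    (tw : (Fin d → ℝ) → ℝ) (htw : ContDiff ℝ 2 tw) :
    let mstar : ℝ := 1 / (3 * m - 2)
    let A : Matrix (Fin d) (Fin d) ℝ := S * S
    let piv : Fin d → ℝ := fun i => (1 / R) * ∑ j, A⁻¹ i j * (μ j - r)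
    let Sig : Matrix (Fin d) (Fin d) ℝ :=
      Matrix.of fun k i => piv i * R *
        (S.mulVec (fun l => piv l - (Pi.single i 1 : Fin d → ℝ) l)) k
    let M : Matrix (Fin d) (Fin d) ℝ := (Sig * S).transpose * (Sig * S)
    let D1 : ((Fin d → ℝ) → ℝ) → (Fin d → ℝ) → Fin d → ℝ :=
      fun f x j => fderiv ℝ f x (Pi.single j 1)
    (∀ x : Fin d → ℝ,
      R / 2 * (∑ i, x i ^ 2) - (1 / m) * (∑ j, κ ^ (1 - m) * |D1 tw x j| ^ m)
        + (1 / (2 * R ^ 2)) * ∑ i, ∑ j, D1 (fun y => D1 tw y j) x i * M j i = lam) →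
    let Φ : (Fin d → ℝ) → (Fin d → ℝ) → ℝ := fun s x =>
      (1 / (m * κ ^ (m - 1))) * ∑ j, |S⁻¹.mulVec (fun i => x i / s i) j| ^ m
    let ch0 : ℝ → (Fin d → ℝ) → Fin d → Fin d → ℝ := fun w s i j =>
      w ^ 2 * piv i * piv j / (R ^ 2 * s i * s j) *
        ∑ k, ∑ l, (μ k - r - R * A k i) * A⁻¹ k l * (μ l - r - R * A l j)
    let vpi : ℝ → ℝ → (Fin d → ℝ) → (Fin d → ℝ) → ℝ := fun t w s ξ =>
      g t * w ^ (1 - R + 4 * mstar) *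
        tw (fun k => w ^ (-(1 + mstar)) * S.mulVec (fun i => ξ i * s i) k)
    ∀ t ∈ Set.Icc (0 : ℝ) T, ∀ w : ℝ, 0 < w → ∀ s : Fin d → ℝ, (∀ i, 0 < s i) →
      ∀ ξ : Fin d → ℝ,
        R * g t * w ^ (-R - 1) / 2 * (∑ k, S.mulVec (fun i => ξ i * s i) k ^ 2)
          - (g t * w ^ (-R)) ^ (1 - m) * Φ s (fun j => -(D1 (vpi t w s) ξ j))
          + (1 / 2) * ∑ i, ∑ j, ch0 w s i j * D1 (fun ξ' => D1 (vpi t w s) ξ' j) ξ i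
        = lam * g t * w ^ (3 * m * mstar - R) :=
  stmt13_general d m R κ T lam r hm hR hκ μ S hS g hgpos tw htw
end
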